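/- Let A < B be real numbers and let N : ℝ → [0, 1] be a continuous nondecreasing function with N(x) = 0 for all x ≤ A and N(x) = 1 for all x ≥ B. Then for every ε > 0 there exist a positive integer k, parameters α_i > 0 with Σ_{i=1}^k α_i = 1, μ_i ∈ ℝ, s_i > 0 defining the logistic mixture cdf F(x) = Σ_{i=1}^k α_i · sigmoid((x − μ_i)/s_i), and bounds A* < B* such that sup_{x ∈ [A, B]} |(F(x) − F(A*)) / (F(B*) − F(A*)) − N(x)| < ε. -/

import Mathlib

open Finset Set

noncomputable def sigmoid (t : ℝ) : ℝ := 1 / (1 + Real.exp (-t))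

lemma sigmoid_pos (t : ℝ) : 0 < sigmoid t := by
  unfold sigmoid; positivity

lemma sigmoid_lt_one (t : ℝ) : sigmoid t < 1 := by
  unfold sigmoid
  rw [div_lt_one (by positivity)]
  linarith [Real.exp_pos (-t)]

lemma sigmoid_le_exp (t : ℝ) : sigmoid t ≤ Real.exp t := by
  unfold sigmoid
  rw [div_le_iff₀ (by positivity)]
  have h1 : Real.exp t * Real.exp (-t) = 1 := by rw [← Real.exp_add]; simp
  nlinarith [Real.exp_pos t, Real.exp_pos (-t)]

lemma one_sub_sigmoid_le_exp (t : ℝ) : 1 - sigmoid t ≤ Real.exp (-t) := by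
  have hE := Real.exp_pos (-t)
  have hd : (0:ℝ) < 1 + Real.exp (-t) := by linarith
  have h : 1 - Real.exp (-t) ≤ sigmoid t := by
    unfold sigmoid
    rw [le_div_iff₀ hd]
    nlinarith [sq_nonneg (Real.exp (-t))]
  linarith

lemma sigmoid_step (t : ℝ) : |sigmoid t - (if 0 ≤ t then 1 else 0)| ≤ Real.exp (-|t|) := by
  by_cases h : 0 ≤ t
  · rw [if_pos h, abs_of_nonpos (by linarith [sigmoid_lt_one t]), abs_of_nonneg h]
    linarith [one_sub_sigmoid_le_exp t]
  · rw [if_neg h, sub_zero, abs_of_pos (sigmoid_pos t), abs_of_neg (lt_of_not_ge h), neg_neg]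
    exact sigmoid_le_exp t

set_option maxHeartbeats 2000000 in
/-- Lemma 5: PNN normalizations of logistic mixture cdfs uniformly approximate on `[A, B]`
any continuous nondecreasing cdf `N : ℝ → [0, 1]` that is `0` below `A` and `1` above `B`. -/
theorem pnn_approximates_monotone_cdf
    (A B : ℝ) (hAB : A < B)
    (N : ℝ → ℝ) (hNc : Continuous N) (hNmono : Monotone N)
    (hNrange : ∀ x, N x ∈ Icc (0 : ℝ) 1)
    (hNA : ∀ x ≤ A, N x = 0) (hNB : ∀ x, B ≤ x → N x = 1) :
    ∀ ε > (0 : ℝ), ∃ (k : ℕ), 1 ≤ k ∧ ∃ (α μ s : Fin k → ℝ),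
      (∀ i, 0 < α i) ∧ (∑ i, α i = 1) ∧ (∀ i, 0 < s i) ∧
      ∃ Astar Bstar : ℝ, Astar < Bstar ∧
        ∀ x ∈ Icc A B,
          |((∑ i, α i * sigmoid ((x - μ i) / s i))
              - ∑ i, α i * sigmoid ((Astar - μ i) / s i))
            / ((∑ i, α i * sigmoid ((Bstar - μ i) / s i))
              - ∑ i, α i * sigmoid ((Astar - μ i) / s i))
            - N x| < ε := by
  intro ε hε
  obtain ⟨n, hn⟩ := exists_nat_gt (9 / ε)
  set k := n + 2 with hkdef
  have hk1 : 1 ≤ k := by omega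
  have hkpos : (0:ℝ) < k := by positivity
  have hkgt : 9 / ε < (k:ℝ) := by
    calc 9/ε < n := hn
    _ ≤ (k:ℝ) := by exact_mod_cast Nat.le_add_right n 2
  have hinvk : 1 / (k:ℝ) < ε / 9 := by
    rw [div_lt_div_iff₀ hkpos (by norm_num : (0:ℝ) < 9)]
    rw [div_lt_iff₀ hε] at hkgt
    linarith
  refine ⟨k, hk1, ?_⟩
  have hNA0 : N A = 0 := hNA A le_rfl
  have hNB1 : N B = 1 := hNB B le_rfl
  -- quantiles
  have hc : ∀ i : Fin k, ∃ x, x ∈ Icc A B ∧ N x = (2 * (i:ℝ) + 1) / (2 * k) := by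
    intro i
    have hik : (i:ℝ) < k := by exact_mod_cast i.isLt
    have hmem : (2 * (i:ℝ) + 1) / (2 * k) ∈ Icc (N A) (N B) := by
      rw [hNA0, hNB1]
      constructor
      · positivity
      · rw [div_le_one (by positivity)]
        have h2 : ((i:ℕ):ℝ) + 1 ≤ (k:ℝ) := by exact_mod_cast i.isLt
        linarith
    obtain ⟨x, hx, hNx⟩ := intermediate_value_Icc hAB.le hNc.continuousOn hmem
    exact ⟨x, hx, hNx⟩
  choose q hqmem hqval using hc
  have hqmono : StrictMono q := by
    intro i j hij
    by_contra hcon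
    push_neg at hcon
    have h1 := hNmono hcon
    rw [hqval, hqval] at h1
    have hij' : (i:ℝ) < (j:ℝ) := by exact_mod_cast hij
    have h2k : (0:ℝ) < 2 * k := by positivity
    rw [div_le_div_iff₀ h2k h2k] at h1
    nlinarith
  -- minimal gap δ
  have hoff : (Finset.univ.offDiag : Finset (Fin k × Fin k)).Nonempty := by
    refine ⟨(⟨0, by omega⟩, ⟨1, by omega⟩), ?_⟩
    rw [Finset.mem_offDiag]
    exact ⟨Finset.mem_univ _, Finset.mem_univ _, by simp [Fin.ext_iff]⟩
  set δ := Finset.inf' _ hoff (fun p : Fin k × Fin k => |q p.1 - q p.2|) with hδdef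
  have hδpos : 0 < δ := by
    rw [hδdef, Finset.lt_inf'_iff]
    intro p hp
    rw [Finset.mem_offDiag] at hp
    exact abs_pos.mpr (sub_ne_zero.mpr (hqmono.injective.ne hp.2.2))
  have hδle : ∀ i j : Fin k, i ≠ j → δ ≤ |q i - q j| := by
    intro i j hij
    exact Finset.inf'_le _ (show ((i, j) : Fin k × Fin k) ∈ _ from
      Finset.mem_offDiag.mpr ⟨Finset.mem_univ _, Finset.mem_univ _, hij⟩)
  -- scale s
  set M := max 1 (Real.log (3 / ε)) with hMdef
  have hM1 : (1:ℝ) ≤ M := le_max_left _ _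
  have hMpos : (0:ℝ) < M := by linarith
  set s := δ / (2 * M) with hsdef
  have hspos : 0 < s := by positivity
  have hsM : δ / (2 * s) = M := by rw [hsdef]; field_simp
  have hEbound : Real.exp (-(δ / (2 * s))) ≤ ε / 3 := by
    rw [hsM]
    have h1 : Real.exp (-M) ≤ Real.exp (-(Real.log (3/ε))) :=
      Real.exp_le_exp.mpr (neg_le_neg (le_max_right _ _))
    have h2 : Real.exp (-(Real.log (3/ε))) = (3/ε)⁻¹ := by
      rw [Real.exp_neg, Real.exp_log (by positivity)]
    rw [h2] at h1
    calc Real.exp (-M) ≤ (3/ε)⁻¹ := h1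
    _ = ε / 3 := by field_simp
  -- tail cutoff
  set η := min (ε / 18) (1/4 : ℝ) with hηdef
  have hηpos : 0 < η := lt_min (by positivity) (by norm_num)
  have hηε : η ≤ ε / 18 := min_le_left _ _
  have hη4 : η ≤ 1/4 := min_le_right _ _
  set T := max 1 (Real.log (1 / η)) with hTdef
  have hT1 : (1:ℝ) ≤ T := le_max_left _ _
  have hTpos : (0:ℝ) < T := by linarith
  have hexpT : Real.exp (-T) ≤ η := by
    have h1 : Real.exp (-T) ≤ Real.exp (-(Real.log (1/η))) :=
      Real.exp_le_exp.mpr (neg_le_neg (le_max_right _ _))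
    have h2 : Real.exp (-(Real.log (1/η))) = (1/η)⁻¹ := by
      rw [Real.exp_neg, Real.exp_log (by positivity)]
    rw [h2] at h1
    simpa using h1
  refine ⟨fun _ => 1/(k:ℝ), q, fun _ => s, fun i => by positivity, ?_, fun i => hspos,
    A - s*T, B + s*T, by nlinarith, ?_⟩
  · rw [Finset.sum_const, Finset.card_univ, Fintype.card_fin, nsmul_eq_mul]
    field_simp
  intro x hx
  set F : ℝ → ℝ := fun y => ∑ i, (1/(k:ℝ)) * sigmoid ((y - q i) / s) with hFdef
  show |(F x - F (A - s*T)) / (F (B + s*T) - F (A - s*T)) - N x| < ε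
  -- bounds on F values
  have hF01 : ∀ y, 0 ≤ F y ∧ F y ≤ 1 := by
    intro y
    constructor
    · apply Finset.sum_nonneg
      intro i _
      have := sigmoid_pos ((y - q i)/s)
      positivity
    · calc F y ≤ ∑ _i : Fin k, (1/(k:ℝ)) * 1 := by
            apply Finset.sum_le_sum
            intro i _
            exact mul_le_mul_of_nonneg_left (le_of_lt (sigmoid_lt_one _)) (by positivity)
      _ = 1 := by
            rw [Finset.sum_const, Finset.card_univ, Fintype.card_fin, nsmul_eq_mul]
            field_simp
  have hsumconst : ∀ c : ℝ, (∑ _i : Fin k, (1/(k:ℝ)) * c) = c := by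
    intro c
    rw [Finset.sum_const, Finset.card_univ, Fintype.card_fin, nsmul_eq_mul]
    field_simp
  -- a small, b near 1
  have ha : F (A - s*T) ≤ η := by
    calc F (A - s*T) ≤ ∑ _i : Fin k, (1/(k:ℝ)) * η := by
          apply Finset.sum_le_sum
          intro i _
          apply mul_le_mul_of_nonneg_left _ (by positivity)
          have h1 : (A - s*T - q i) / s ≤ -T := by
            rw [div_le_iff₀ hspos]
            have := (hqmem i).1
            nlinarith
          calc sigmoid ((A - s*T - q i)/s) ≤ Real.exp ((A - s*T - q i)/s) := sigmoid_le_exp _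
          _ ≤ Real.exp (-T) := Real.exp_le_exp.mpr h1
          _ ≤ η := hexpT
    _ = η := hsumconst η
  have hb : 1 - η ≤ F (B + s*T) := by
    calc (1:ℝ) - η = ∑ _i : Fin k, (1/(k:ℝ)) * (1 - η) := (hsumconst _).symm
    _ ≤ F (B + s*T) := by
          apply Finset.sum_le_sum
          intro i _
          apply mul_le_mul_of_nonneg_left _ (by positivity)
          have h1 : T ≤ (B + s*T - q i) / s := by
            rw [le_div_iff₀ hspos]
            have := (hqmem i).2
            nlinarith
          have h2 : Real.exp (-((B + s*T - q i)/s)) ≤ Real.exp (-T) :=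
            Real.exp_le_exp.mpr (neg_le_neg h1)
          have h3 := one_sub_sigmoid_le_exp ((B + s*T - q i)/s)
          linarith [hexpT]
  set a := F (A - s*T) with hadef
  set b := F (B + s*T) with hbdef
  have ha0 : 0 ≤ a := (hF01 _).1
  have hb1 : b ≤ 1 := (hF01 _).2
  have hD : 1/2 ≤ b - a := by linarith
  have hDpos : 0 < b - a := by linarith
  -- step function G
  set m := (Finset.univ.filter (fun i : Fin k => q i ≤ x)).card with hmdef
  set G : ℝ := (m:ℝ) / k with hGdef
  -- |F x - G| ≤ 1/k + ε/3
  have hFG : |F x - G| ≤ 1/(k:ℝ) + ε/3 := by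
    have hGsum : G = ∑ i : Fin k, (1/(k:ℝ)) * (if q i ≤ x then (1:ℝ) else 0) := by
      rw [← Finset.mul_sum, Finset.sum_boole, hGdef]
      ring
    rw [hGsum, hFdef, ← Finset.sum_sub_distrib]
    calc |∑ i : Fin k, ((1/(k:ℝ)) * sigmoid ((x - q i)/s) - (1/(k:ℝ)) * (if q i ≤ x then (1:ℝ) else 0))|
        ≤ ∑ i : Fin k, |(1/(k:ℝ)) * sigmoid ((x - q i)/s) - (1/(k:ℝ)) * (if q i ≤ x then (1:ℝ) else 0)| :=
          Finset.abs_sum_le_sum_abs _ _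
      _ ≤ ∑ i : Fin k, (1/(k:ℝ)) * ((if |x - q i| < δ/2 then (1:ℝ) else 0) + ε/3) := by
          apply Finset.sum_le_sum
          intro i _
          rw [← mul_sub, abs_mul, abs_of_pos (by positivity : (0:ℝ) < 1/(k:ℝ))]
          apply mul_le_mul_of_nonneg_left _ (by positivity)
          have hiff : (0 ≤ (x - q i)/s) ↔ (q i ≤ x) := by
            rw [le_div_iff₀ hspos]
            constructor <;> intro h <;> nlinarith
          have hstep := sigmoid_step ((x - q i)/s)
          simp only [hiff] at hstep
          by_cases hclose : |x - q i| < δ/2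
          · rw [if_pos hclose]
            have h1 := sigmoid_pos ((x - q i)/s)
            have h2 := sigmoid_lt_one ((x - q i)/s)
            rw [abs_le]
            constructor <;> split <;> nlinarith [hε]
          · rw [if_neg hclose]
            push_neg at hclose
            have habs : |(x - q i)/s| = |x - q i| / s := by
              rw [abs_div, abs_of_pos hspos]
            have h1 : δ/(2*s) ≤ |x - q i| / s := by
              rw [div_le_div_iff₀ (by positivity) hspos]
              nlinarith
            calc |sigmoid ((x - q i)/s) - (if q i ≤ x then (1:ℝ) else 0)|
                ≤ Real.exp (-|(x - q i)/s|) := hstep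
              _ ≤ Real.exp (-(δ/(2*s))) := by
                  apply Real.exp_le_exp.mpr
                  rw [habs]
                  linarith
              _ ≤ ε/3 := hEbound
              _ = 0 + ε/3 := by ring
      _ = (1/(k:ℝ)) * ((Finset.univ.filter (fun i : Fin k => |x - q i| < δ/2)).card : ℝ) + ε/3 := by
          rw [← Finset.mul_sum, Finset.sum_add_distrib, Finset.sum_boole,
            Finset.sum_const, Finset.card_univ, Fintype.card_fin, nsmul_eq_mul]
          field_simp
          ring
      _ ≤ 1/(k:ℝ) + ε/3 := by
          have hcard : (Finset.univ.filter (fun i : Fin k => |x - q i| < δ/2)).card ≤ 1 := by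
            apply Finset.card_le_one.mpr
            intro i hi j hj
            simp only [Finset.mem_filter] at hi hj
            by_contra hij
            have h1 := hδle i j hij
            have h2 : |q i - q j| ≤ |x - q i| + |x - q j| := by
              calc |q i - q j| = |(q i - x) + (x - q j)| := by ring_nf
              _ ≤ |q i - x| + |x - q j| := abs_add_le _ _
              _ = |x - q i| + |x - q j| := by rw [abs_sub_comm (q i) x]
            linarith [hi.2, hj.2]
          have hcc : ((Finset.univ.filter (fun i : Fin k => |x - q i| < δ/2)).card : ℝ) ≤ 1 := by
            exact_mod_cast hcard
          have := mul_le_mul_of_nonneg_left hcc (by positivity : (0:ℝ) ≤ 1/(k:ℝ))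
          simp only [mul_one] at this
          linarith
  -- |G - N x| ≤ 1/(2k)
  have hGN : |G - N x| ≤ 1/(2*(k:ℝ)) := by
    have hmk : m ≤ k := by
      calc m ≤ Finset.univ.card := Finset.card_filter_le _ _
      _ = k := by rw [Finset.card_univ, Fintype.card_fin]
    have hupper : N x ≤ (2*(m:ℝ) + 1)/(2*k) := by
      by_cases h : m < k
      · have hqx : x < q ⟨m, h⟩ := by
          by_contra hcon
          push_neg at hcon
          have hsub : Finset.Iic (⟨m, h⟩ : Fin k) ⊆ Finset.univ.filter (fun i : Fin k => q i ≤ x) := by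
            intro j hj
            rw [Finset.mem_Iic] at hj
            rw [Finset.mem_filter]
            exact ⟨Finset.mem_univ _, le_trans (hqmono.monotone hj) hcon⟩
          have := Finset.card_le_card hsub
          rw [Fin.card_Iic] at this
          simp only [← hmdef] at this
          omega
        have h1 : N x ≤ N (q ⟨m, h⟩) := hNmono hqx.le
        rw [hqval] at h1
        simpa using h1
      · have h1 := (hNrange x).2
        have h2 : (1:ℝ) ≤ (2*(m:ℝ) + 1)/(2*k) := by
          rw [le_div_iff₀ (by positivity)]
          have : (k:ℝ) ≤ m := by exact_mod_cast le_of_not_gt h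
          linarith
        linarith
    have hlower : (2*(m:ℝ) - 1)/(2*k) ≤ N x := by
      by_cases h : 0 < m
      · have hmm : m - 1 < k := by omega
        have hqx : q ⟨m-1, hmm⟩ ≤ x := by
          by_contra hcon
          push_neg at hcon
          have hsub : Finset.univ.filter (fun i : Fin k => q i ≤ x) ⊆ Finset.Iio (⟨m-1, hmm⟩ : Fin k) := by
            intro j hj
            rw [Finset.mem_filter] at hj
            rw [Finset.mem_Iio]
            by_contra hj2
            push_neg at hj2
            exact absurd (le_trans (hqmono.monotone hj2) hj.2) (not_le.mpr hcon)
          have := Finset.card_le_card hsub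
          rw [Fin.card_Iio] at this
          simp only [← hmdef] at this
          omega
        have h1 : N (q ⟨m-1, hmm⟩) ≤ N x := hNmono hqx
        rw [hqval] at h1
        have hc : ((⟨m-1, hmm⟩ : Fin k) : ℝ) = (m:ℝ) - 1 := by
          have : ((m-1 : ℕ) : ℝ) = (m:ℝ) - 1 := by
            rw [Nat.cast_sub h]
            simp
          simpa using this
        rw [hc] at h1
        calc (2*(m:ℝ) - 1)/(2*k) = (2*((m:ℝ)-1) + 1)/(2*k) := by ring_nf
        _ ≤ N x := h1
      · have h0 : m = 0 := by omega
        have h1 := (hNrange x).1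
        have h2 : (2*(m:ℝ) - 1)/(2*k) ≤ 0 :=
          div_nonpos_iff.mpr (Or.inr ⟨by rw [h0]; norm_num, by positivity⟩)
        linarith
    have heq : G - N x = (2*(m:ℝ) - N x * (2*k)) / (2*k) := by
      rw [hGdef]
      field_simp
    rw [heq, abs_div, abs_of_pos (by positivity : (0:ℝ) < 2*(k:ℝ))]
    have e1 : N x * (2*(k:ℝ)) ≤ 2*(m:ℝ) + 1 := by
      rw [le_div_iff₀ (by positivity)] at hupper
      linarith
    have e2 : 2*(m:ℝ) - 1 ≤ N x * (2*(k:ℝ)) := by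
      rw [div_le_iff₀ (by positivity)] at hlower
      linarith
    gcongr
    rw [abs_le]
    constructor <;> linarith
  -- normalization error
  have hFx0 : 0 ≤ F x := (hF01 x).1
  have hFx1 : F x ≤ 1 := (hF01 x).2
  have hnorm : |(F x - a)/(b - a) - F x| ≤ 4*η := by
    have heq : (F x - a)/(b - a) - F x = (F x * (1 - (b - a)) - a) / (b - a) := by
      field_simp
      ring
    rw [heq, abs_div, abs_of_pos hDpos]
    have h1 : 0 ≤ 1 - (b - a) := by linarith
    have h2 : 1 - (b - a) ≤ 2*η := by linarith
    have hnum : |F x * (1 - (b - a)) - a| ≤ 2*η := by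
      rw [abs_le]
      constructor
      · nlinarith [mul_nonneg hFx0 h1]
      · nlinarith [mul_le_mul_of_nonneg_right hFx1 h1]
    calc |F x * (1 - (b-a)) - a| / (b - a) ≤ (2*η) / (1/2) :=
          div_le_div₀ (by positivity) hnum (by norm_num) hD
      _ = 4*η := by ring
  -- combine
  have tri1 : |(F x - a)/(b-a) - N x| ≤ |(F x - a)/(b-a) - F x| + (|F x - G| + |G - N x|) := by
    calc |(F x - a)/(b-a) - N x| ≤ |(F x - a)/(b-a) - F x| + |F x - N x| := abs_sub_le _ _ _
    _ ≤ |(F x - a)/(b-a) - F x| + (|F x - G| + |G - N x|) := by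
        linarith [abs_sub_le (F x) G (N x)]
  have hhalf : 1/(2*(k:ℝ)) = (1/(k:ℝ))/2 := by ring
  have hfin : 4*η + (1/(k:ℝ) + ε/3) + 1/(2*(k:ℝ)) < ε := by
    rw [hhalf]
    linarith
  linarith
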